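/- Let w : ℝ → [1,∞) be an arbitrary weight function, let κ be a concave index function, and suppose ρ := ‖w · Ff_X · |κ(|Ff_ε|²/w²)|^{−1/2}‖ < ∞. Then there exists a constant C_κ > 0 depending only on κ such that for every α > 0, ‖w · Ff_X · 1{|Ff_ε|²/w² < α}‖² ≤ C_κ · κ(α) · ρ². -/

import Mathlib

/-!
Common setup for formalizing "Deconvolution with unknown error distribution"
(J. Johannes, Ann. Statist. 2009).
-/

noncomputable section

open MeasureTheory Filter Topology ProbabilityTheory

/-- The (unitary) Fourier transform `[Fg](t) = (2π)^{-1/2} ∫ e^{-itx} g(x) dx`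
of an integrable function `g : ℝ → ℂ`. -/
def ft (g : ℝ → ℂ) (t : ℝ) : ℂ :=
  (Real.sqrt (2 * Real.pi) : ℂ)⁻¹ * ∫ x : ℝ, Complex.exp (-(Complex.I * (t : ℂ) * (x : ℂ))) * g x

/-- Fourier transform of a real-valued function. -/
def ftR (g : ℝ → ℝ) (t : ℝ) : ℂ := ft (fun x => (g x : ℂ)) t

/-- `f` is a probability density on `ℝ` belonging to `L²(ℝ)`. -/
def IsDensity (f : ℝ → ℝ) : Prop :=
  (∀ x, 0 ≤ f x) ∧ Integrable f ∧ MemLp f 2 (volume : Measure ℝ) ∧ (∫ x, f x) = 1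

/-- convolution `f ⋆ g`. -/
def convol (f g : ℝ → ℝ) (y : ℝ) : ℝ := ∫ x : ℝ, f x * g (y - x)

/-- squared `L²(ℝ)`-distance between two (real-valued) functions. -/
def l2distSq (g h : ℝ → ℝ) : ℝ := ∫ x : ℝ, (g x - h x) ^ 2

/-- squared Sobolev `H_s`-distance between two functions *given by their Fourier
transforms* `G` and `H`:  `‖g - h‖_s² = ∫ (1+t²)^s |G(t) - H(t)|² dt`. -/
def sobDistSq (s : ℝ) (G H : ℝ → ℂ) : ℝ :=
  ∫ t : ℝ, (1 + t ^ 2) ^ s * ‖G t - H t‖ ^ 2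

/-- the measure on `ℝ` with (Lebesgue) density `f`. -/
def densMeasure (f : ℝ → ℝ) : Measure ℝ :=
  volume.withDensity fun x => ENNReal.ofReal (f x)

/-- the empirical Fourier transform `(m√(2π))^{-1} Σ_j e^{-itε_j}` of a sample `e`. -/
def empFT {m : ℕ} (e : Fin m → ℝ) (t : ℝ) : ℂ :=
  ((m : ℂ) * (Real.sqrt (2 * Real.pi) : ℂ))⁻¹ * ∑ j, Complex.exp (-(Complex.I * (t : ℂ) * (e j : ℂ)))

/-- `κ : (0,1] → ℝ⁺` (modeled as a function on `ℝ`) is an *index function*: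
continuous and strictly increasing on `(0,1]`, positive there, with `κ(0+) = 0`. -/
def IsIndexFunction (κ : ℝ → ℝ) : Prop :=
  ContinuousOn κ (Set.Ioc 0 1) ∧ StrictMonoOn κ (Set.Ioc 0 1) ∧
    (∀ t ∈ Set.Ioc (0 : ℝ) 1, 0 < κ t) ∧ Tendsto κ (𝓝[>] (0 : ℝ)) (𝓝 0)

/-!
On the set `{q < α}`, where `q = |Ff_ε|²/w² ∈ (0,1]`, monotonicity of `κ` gives `κ(q) ≤ κ(α)`,
hence `w²|Ff_X|² ≤ κ(α) · w²|Ff_X|²/κ(q)` pointwise; integrating yields the bound with `C_κ = 1`.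
-/

lemma norm_ft_le (g : ℝ → ℂ) (t : ℝ) :
    ‖ft g t‖ ≤ (Real.sqrt (2 * Real.pi))⁻¹ * ∫ x : ℝ, ‖g x‖ := by
  have hexp : ∀ x : ℝ, ‖Complex.exp (-(Complex.I * (t : ℂ) * (x : ℂ))) * g x‖ = ‖g x‖ := by
    intro x
    rw [norm_mul, Complex.norm_exp]
    simp
  rw [ft, norm_mul, norm_inv, Complex.norm_real, Real.norm_of_nonneg (Real.sqrt_nonneg _)]
  gcongr
  calc _ ≤ ∫ x : ℝ, ‖Complex.exp (-(Complex.I * (t : ℂ) * (x : ℂ))) * g x‖ :=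
        norm_integral_le_integral_norm _
    _ = ∫ x : ℝ, ‖g x‖ := by simp only [hexp]

lemma IsDensity.norm_ftR_le_one {f : ℝ → ℝ} (hf : IsDensity f) (t : ℝ) : ‖ftR f t‖ ≤ 1 := by
  obtain ⟨hnonneg, -, -, hmass⟩ := hf
  have hnorm : (∫ x : ℝ, ‖(f x : ℂ)‖) = 1 := by
    simpa only [Complex.norm_real, Real.norm_of_nonneg (hnonneg _)] using hmass
  have hsqrt : 1 ≤ Real.sqrt (2 * Real.pi) :=
    Real.one_le_sqrt.mpr (by nlinarith [Real.pi_gt_three])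
  calc ‖ftR f t‖ ≤ (Real.sqrt (2 * Real.pi))⁻¹ * ∫ x : ℝ, ‖(f x : ℂ)‖ := norm_ft_le _ t
    _ ≤ 1 := by rw [hnorm, mul_one]; exact inv_le_one_of_one_le₀ hsqrt

lemma sq_div_sq_mem_Ioc {a b : ℝ} (ha : 0 < a) (ha1 : a ≤ 1) (hb : 1 ≤ b) :
    a ^ 2 / b ^ 2 ∈ Set.Ioc (0 : ℝ) 1 := by
  have hb0 : 0 < b := one_pos.trans_le hb
  refine ⟨by positivity, (div_le_one (by positivity)).mpr ?_⟩
  nlinarith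

section Truncation

variable {s : Set ℝ} {κ : ℝ → ℝ} {α : ℝ}

lemma ite_lt_le_mul_div (hκ : MonotoneOn κ s) (hκpos : ∀ x ∈ s, 0 < κ x) (hα : α ∈ s)
    {q g : ℝ} (hq : q ∈ s) (hg : 0 ≤ g) :
    (if q < α then g else 0) ≤ κ α * (g / κ q) := by
  have hκq := hκpos q hq
  split_ifs with hlt
  · calc g = κ q * (g / κ q) := (mul_div_cancel₀ g hκq.ne').symm
      _ ≤ κ α * (g / κ q) := by gcongr; exact hκ hq hα hlt.le
  · exact mul_nonneg (hκpos α hα).le (div_nonneg hg hκq.le)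

lemma integral_ite_lt_le_mul_integral_div {X : Type*} [MeasurableSpace X] {μ : Measure X}
    (hκ : MonotoneOn κ s) (hκpos : ∀ x ∈ s, 0 < κ x) (hα : α ∈ s)
    {q g : X → ℝ} (hq : ∀ x, q x ∈ s) (hg : ∀ x, 0 ≤ g x)
    (hint : Integrable (fun x => g x / κ (q x)) μ) :
    (∫ x, if q x < α then g x else 0 ∂μ) ≤ κ α * ∫ x, g x / κ (q x) ∂μ := by
  rw [← integral_const_mul]
  refine integral_mono_of_nonneg (Filter.Eventually.of_forall fun x => ?_)
    (hint.const_mul _) (Filter.Eventually.of_forall fun x => ?_)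
  · dsimp only
    split_ifs
    exacts [hg x, le_rfl]
  · exact ite_lt_le_mul_div hκ hκpos hα (hq x) (hg x)

end Truncation

theorem lemma_A1_iii_general
    (fX fEps : ℝ → ℝ) (w : ℝ → ℝ) (hw : ∀ t, 1 ≤ w t)
    (hfEps : IsDensity fEps)
    (hEpsPos : ∀ t, 0 < ‖ftR fEps t‖)
    (κ : ℝ → ℝ) (hκ : IsIndexFunction κ)
    -- the source condition: `ρ² = ∫ w(t)² |Ff_X(t)|² / κ(|Ff_ε(t)|²/w(t)²) dt < ∞`
    (hsrcInt : Integrable (fun t : ℝ =>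
      (w t) ^ 2 * ‖ftR fX t‖ ^ 2 / κ (‖ftR fEps t‖ ^ 2 / (w t) ^ 2))) :
    ∃ C > 0, ∀ α : ℝ, 0 < α → α ≤ 1 →
      (∫ t : ℝ, if ‖ftR fEps t‖ ^ 2 / (w t) ^ 2 < α then (w t) ^ 2 * ‖ftR fX t‖ ^ 2 else 0)
        ≤ C * κ α *
          ∫ t : ℝ, (w t) ^ 2 * ‖ftR fX t‖ ^ 2 / κ (‖ftR fEps t‖ ^ 2 / (w t) ^ 2) := by
  obtain ⟨-, hmono, hpos, -⟩ := hκ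
  refine ⟨1, one_pos, fun α hα hα1 => ?_⟩
  rw [one_mul]
  exact integral_ite_lt_le_mul_integral_div hmono.monotoneOn hpos ⟨hα, hα1⟩
    (fun t => sq_div_sq_mem_Ioc (hEpsPos t) (hfEps.norm_ftR_le_one t) (hw t))
    (fun t => by positivity) hsrcInt

/-- **Lemma A.1(iii)** (regularization bias, general source condition).
Let `w : ℝ → [1,∞)` be a weight function, let `κ` be a concave index function (defined
on `(0,1]`; note that `|Ff_ε(t)|²/w(t)² ∈ (0,1]`), and suppose
`ρ := ‖w · Ff_X · |κ(|Ff_ε|²/w²)|^{−1/2}‖ < ∞`.  Then there is a constant `C_κ > 0`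
depending only on `κ` such that, for every `α ∈ (0,1]`,
`‖w · Ff_X · 1{|Ff_ε|²/w² < α}‖² ≤ C_κ · κ(α) · ρ²`. -/
theorem lemma_A1_iii
    (fX fEps : ℝ → ℝ) (w : ℝ → ℝ) (hw : ∀ t, 1 ≤ w t)
    (hfX : IsDensity fX) (hfEps : IsDensity fEps)
    (hEpsPos : ∀ t, 0 < ‖ftR fEps t‖)
    (κ : ℝ → ℝ) (hκ : IsIndexFunction κ) (hκconc : ConcaveOn ℝ (Set.Ioc 0 1) κ)
    -- the source condition: `ρ² = ∫ w(t)² |Ff_X(t)|² / κ(|Ff_ε(t)|²/w(t)²) dt < ∞`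
    (hsrcInt : Integrable (fun t : ℝ =>
      (w t) ^ 2 * ‖ftR fX t‖ ^ 2 / κ (‖ftR fEps t‖ ^ 2 / (w t) ^ 2))) :
    ∃ C > 0, ∀ α : ℝ, 0 < α → α ≤ 1 →
      (∫ t : ℝ, if ‖ftR fEps t‖ ^ 2 / (w t) ^ 2 < α then (w t) ^ 2 * ‖ftR fX t‖ ^ 2 else 0)
        ≤ C * κ α *
          ∫ t : ℝ, (w t) ^ 2 * ‖ftR fX t‖ ^ 2 / κ (‖ftR fEps t‖ ^ 2 / (w t) ^ 2) :=
  lemma_A1_iii_general fX fEps w hw hfEps hEpsPos κ hκ hsrcInt
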